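/- Solutions of form ρ(t,x) = (1/a(t)²)·e^{−Φ((Ax₁+Bx₂)/a(t))/K + C}, u(t,x) = (ȧ/a)(x₁, x₂, x̃₃, ..., x̃_N) where each x̃ᵢ ∈ {x₁, x₂}, a(t) = a₁ + a₂t, and Φ'' = ε*e^{−Φ/K} with ε* = α(N)e^C/(A²+B²), satisfy the isothermal Euler–Poisson equations in ℝᴺ for any choice of the x̃ᵢ. -/

import Mathlib

/-- Partial derivative in the `i`-th coordinate of a function on `ℝᴺ`. -/
noncomputable def pd {N : ℕ} (i : Fin N) (g : (Fin N → ℝ) → ℝ) (x : Fin N → ℝ) : ℝ :=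
  deriv (fun y => g (Function.update x i y)) (x i)

/-- Spatial Laplacian on `ℝᴺ`. -/
noncomputable def lap {N : ℕ} (g : (Fin N → ℝ) → ℝ) (x : Fin N → ℝ) : ℝ :=
  ∑ i : Fin N, pd i (fun y => pd i g y) x

/-!
The fields depend on `x` only through the plane variable `z = (A x₀ + B x₁)/a`, whose gradient
`(A e₀ + B e₁)/a` is fixed by the projection `x ↦ x ∘ c`; this projection has rank two, so
`div u = 2ȧ/a`, which exactly compensates the factor `a⁻²` of `ρ` in the continuity equation.
For affine `a` the velocity `(ȧ/a) x ∘ c` has zero material derivative, so the momentum equation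
reduces to the Boltzmann relation `K ∇ρ = -ρ ∇Ψ`, true for `ρ ∝ e^{-Ψ/K}`. Finally
`ΔΨ = (A² + B²) Φ''(z)/a²`, which is `α(N) ρ` by the ODE for `Φ`.
-/

variable {N : ℕ}

def HasPDerivAt (i : Fin N) (g : (Fin N → ℝ) → ℝ) (g' : ℝ) (x : Fin N → ℝ) : Prop :=
  HasDerivAt (fun y => g (Function.update x i y)) g' (x i)

namespace HasPDerivAt

variable {i : Fin N} {f g : (Fin N → ℝ) → ℝ} {f' g' : ℝ} {x : Fin N → ℝ}

theorem pd_eq (h : HasPDerivAt i g g' x) : pd i g x = g' :=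
  HasDerivAt.deriv h

theorem comp {F : ℝ → ℝ} {F' : ℝ} (hF : HasDerivAt F F' (g x)) (hg : HasPDerivAt i g g' x) :
    HasPDerivAt i (fun y => F (g y)) (F' * g') x := by
  rw [← Function.update_eq_self i x] at hF
  exact hF.comp (x i) hg

theorem mul (hf : HasPDerivAt i f f' x) (hg : HasPDerivAt i g g' x) :
    HasPDerivAt i (fun y => f y * g y) (f' * g x + f x * g') x := by
  have h := HasDerivAt.mul hf hg
  rwa [Function.update_eq_self] at h

theorem const_mul (d : ℝ) (hg : HasPDerivAt i g g' x) :
    HasPDerivAt i (fun y => d * g y) (d * g') x :=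
  HasDerivAt.const_mul d hg

theorem mul_const (hg : HasPDerivAt i g g' x) (d : ℝ) :
    HasPDerivAt i (fun y => g y * d) (g' * d) x :=
  HasDerivAt.mul_const hg d

theorem add (hf : HasPDerivAt i f f' x) (hg : HasPDerivAt i g g' x) :
    HasPDerivAt i (fun y => f y + g y) (f' + g') x :=
  HasDerivAt.add hf hg

theorem div_const (hg : HasPDerivAt i g g' x) (d : ℝ) :
    HasPDerivAt i (fun y => g y / d) (g' / d) x :=
  HasDerivAt.div_const hg d

end HasPDerivAt

theorem hasPDerivAt_apply (i j : Fin N) (x : Fin N → ℝ) :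
    HasPDerivAt i (fun y => y j) ((Pi.single i 1 : Fin N → ℝ) j) x :=
  hasDerivAt_pi.mp (hasDerivAt_update x i (x i)) j

theorem pd_const_mul_apply (d : ℝ) (i j : Fin N) (x : Fin N → ℝ) :
    pd i (fun y => d * y j) x = d * (Pi.single i 1 : Fin N → ℝ) j :=
  ((hasPDerivAt_apply i j x).const_mul d).pd_eq

theorem material_derivative_eq_zero {c : Fin N → Fin N} (hc : ∀ i, c (c i) = c i)
    {a : ℝ → ℝ} {v t : ℝ} (ha : ∀ s, HasDerivAt a v s) (hat : a t ≠ 0) (x : Fin N → ℝ)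
    (i : Fin N) :
    deriv (fun s => deriv a s / a s * x (c i)) t
      + ∑ k, deriv a t / a t * x (c k) * pd k (fun y => deriv a t / a t * y (c i)) x = 0 := by
  have hv : ∀ s, deriv a s = v := fun s => (ha s).deriv
  simp only [hv, pd_const_mul_apply, Pi.single_apply, mul_ite, mul_one, mul_zero,
    Finset.sum_ite_eq, Finset.mem_univ, if_true, hc]
  have hvel : HasDerivAt (fun s => v / a s * x (c i)) _ t :=
    ((hasDerivAt_const t v).div (ha t) hat).mul_const (x (c i))
  rw [hvel.deriv]
  field_simp
  ring

theorem boltzmann_relation {K : ℝ} (hK : K ≠ 0) (C s : ℝ) {i : Fin N} {Ψ : (Fin N → ℝ) → ℝ}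
    {Ψ' : ℝ} {x : Fin N → ℝ} (hΨ : HasPDerivAt i Ψ Ψ' x) :
    K * pd i (fun y => Real.exp (-Ψ y / K + C) / s ^ 2) x
      = -(Real.exp (-Ψ x / K + C) / s ^ 2 * pd i Ψ x) := by
  have hF : HasDerivAt (fun r => Real.exp (-r / K + C) / s ^ 2) _ (Ψ x) :=
    (((hasDerivAt_neg' (Ψ x)).div_const K).add_const C).exp.div_const (s ^ 2)
  rw [(hΨ.comp hF).pd_eq, hΨ.pd_eq]
  field_simp

section Plane

variable [NeZero N]

def planeGrad (A B : ℝ) : Fin N → ℝ := Pi.single 0 A + Pi.single 1 B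

theorem hasPDerivAt_plane (A B s : ℝ) (i : Fin N) (x : Fin N → ℝ) :
    HasPDerivAt i (fun y => (A * y 0 + B * y 1) / s) (planeGrad A B i / s) x := by
  have h := (((hasPDerivAt_apply i 0 x).const_mul A).add
    ((hasPDerivAt_apply i 1 x).const_mul B)).div_const s
  convert h using 2
  simp [planeGrad, Pi.single_apply, eq_comm]

theorem sum_planeGrad_mul (A B : ℝ) (f : Fin N → ℝ) :
    ∑ i, planeGrad A B i * f i = A * f 0 + B * f 1 := by
  simp [planeGrad, Pi.single_apply, add_mul, Finset.sum_add_distrib]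

theorem sum_planeGrad_sq {A B : ℝ} (h01 : (0 : Fin N) ≠ 1) :
    ∑ i : Fin N, planeGrad A B i * planeGrad A B i = A ^ 2 + B ^ 2 := by
  rw [sum_planeGrad_mul]
  simp [planeGrad, h01, h01.symm, sq]

theorem lap_comp_plane (A B s : ℝ) (h01 : (0 : Fin N) ≠ 1) {Φ : ℝ → ℝ}
    (hΦ : Differentiable ℝ Φ) (x : Fin N → ℝ)
    (hΦ' : DifferentiableAt ℝ (deriv Φ) ((A * x 0 + B * x 1) / s)) :
    lap (fun y => Φ ((A * y 0 + B * y 1) / s)) x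
      = deriv (deriv Φ) ((A * x 0 + B * x 1) / s) * ((A ^ 2 + B ^ 2) / s ^ 2) := by
  have hterm : ∀ i, pd i (fun y => pd i (fun y => Φ ((A * y 0 + B * y 1) / s)) y) x
      = deriv (deriv Φ) ((A * x 0 + B * x 1) / s) / s ^ 2
        * (planeGrad A B i * planeGrad A B i) := by
    intro i
    have hfirst : (fun y => pd i (fun y => Φ ((A * y 0 + B * y 1) / s)) y)
        = fun y => deriv Φ ((A * y 0 + B * y 1) / s) * (planeGrad A B i / s) :=
      funext fun y => ((hasPDerivAt_plane A B s i y).comp (hΦ _).hasDerivAt).pd_eq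
    rw [hfirst, (((hasPDerivAt_plane A B s i x).comp hΦ'.hasDerivAt).mul_const _).pd_eq]
    ring
  rw [lap, Finset.sum_congr rfl fun i _ => hterm i, ← Finset.mul_sum, sum_planeGrad_sq h01]
  ring

theorem selector_idem {c : Fin N → Fin N} (hc0 : c 0 = 0) (hc1 : c 1 = 1)
    (hc : ∀ i, c i = 0 ∨ c i = 1) (i : Fin N) : c (c i) = c i := by
  rcases hc i with h | h <;> simp [h, hc0, hc1]

theorem sum_single_selector_eq_two (h01 : (0 : Fin N) ≠ 1) {c : Fin N → Fin N} (hc0 : c 0 = 0)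
    (hc1 : c 1 = 1) (hc : ∀ i, c i = 0 ∨ c i = 1) :
    ∑ i, (Pi.single i 1 : Fin N → ℝ) (c i) = 2 := by
  have hfix : ∀ i, c i = i ↔ i ∈ ({0, 1} : Finset (Fin N)) := by
    intro i
    rcases hc i with h | h <;> grind
  simp only [Pi.single_apply, hfix, Finset.sum_ite_mem, Finset.univ_inter, Finset.sum_const,
    Finset.card_pair h01]
  norm_num

theorem sum_planeGrad_mul_selector {c : Fin N → Fin N} (hc0 : c 0 = 0) (hc1 : c 1 = 1)
    (A B : ℝ) (x : Fin N → ℝ) :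
    ∑ i, planeGrad A B i * x (c i) = A * x 0 + B * x 1 := by
  rw [sum_planeGrad_mul A B (fun i => x (c i)), hc0, hc1]

theorem continuity_equation (h01 : (0 : Fin N) ≠ 1) {c : Fin N → Fin N} (hc0 : c 0 = 0)
    (hc1 : c 1 = 1) (hc : ∀ i, c i = 0 ∨ c i = 1) (A B : ℝ) {G : ℝ → ℝ} (hG : Differentiable ℝ G)
    {a : ℝ → ℝ} {t : ℝ} (ha : DifferentiableAt ℝ a t) (hat : a t ≠ 0) (x : Fin N → ℝ) :
    deriv (fun s => G ((A * x 0 + B * x 1) / a s) / a s ^ 2) t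
      + ∑ i, pd i (fun y => G ((A * y 0 + B * y 1) / a t) / a t ^ 2
          * (deriv a t / a t * y (c i))) x = 0 := by
  set z := (A * x 0 + B * x 1) / a t
  have htime : HasDerivAt (fun s => G ((A * x 0 + B * x 1) / a s) / a s ^ 2) _ t :=
    ((hG z).hasDerivAt.comp t
    ((hasDerivAt_const t (A * x 0 + B * x 1)).div ha.hasDerivAt hat)).div
    (ha.hasDerivAt.pow 2) (pow_ne_zero 2 hat)
  simp only [Function.comp_apply, Pi.div_apply] at htime
  have hspace : ∀ i, pd i (fun y => G ((A * y 0 + B * y 1) / a t) / a t ^ 2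
      * (deriv a t / a t * y (c i))) x
      = deriv G z * deriv a t / a t ^ 4 * (planeGrad A B i * x (c i))
        + G z * deriv a t / a t ^ 3 * (Pi.single i 1 : Fin N → ℝ) (c i) := by
    intro i
    rw [((((hasPDerivAt_plane A B (a t) i x).comp (hG z).hasDerivAt).div_const (a t ^ 2)).mul
      ((hasPDerivAt_apply i (c i) x).const_mul (deriv a t / a t))).pd_eq]
    field_simp
    ring
  rw [htime.deriv, Finset.sum_congr rfl fun i _ => hspace i, Finset.sum_add_distrib,
    ← Finset.mul_sum, ← Finset.mul_sum, sum_planeGrad_mul_selector hc0 hc1,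
    sum_single_selector_eq_two h01 hc0 hc1 hc]
  field_simp
  ring

end Plane

theorem stmt_17_general {N : ℕ} [NeZero N] (hN : 3 ≤ N) (A B K C a₁ a₂ αN : ℝ)
    (hK : 0 < K) (hAB : 0 < A ^ 2 + B ^ 2)
    (c : Fin N → Fin N) (hc0 : c 0 = 0) (hc1 : c 1 = 1)
    (hc : ∀ i, c i = 0 ∨ c i = 1)
    (Φ : ℝ → ℝ) (hΦ : ContDiff ℝ 2 Φ)
    (hODE : ∀ s : ℝ, deriv (deriv Φ) s
        = (αN * Real.exp C / (A ^ 2 + B ^ 2)) * Real.exp (-Φ s / K))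
    (a : ℝ → ℝ) (ha : a = fun t => a₁ + a₂ * t)
    (ρ : ℝ → (Fin N → ℝ) → ℝ)
    (hρ : ρ = fun t x =>
      Real.exp (-Φ ((A * x 0 + B * x 1) / a t) / K + C) / (a t) ^ 2)
    (u : ℝ → (Fin N → ℝ) → Fin N → ℝ)
    (hu : u = fun t x i => deriv a t / a t * x (c i))
    (Ψ : ℝ → (Fin N → ℝ) → ℝ)
    (hΨ : Ψ = fun t x => Φ ((A * x 0 + B * x 1) / a t)) :
    ∀ t : ℝ, a t ≠ 0 → ∀ x : Fin N → ℝ,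
      (deriv (fun s => ρ s x) t
          + ∑ i : Fin N, pd i (fun y => ρ t y * u t y i) x = 0) ∧
      (∀ i : Fin N,
        ρ t x * (deriv (fun s => u s x i) t
            + ∑ k : Fin N, u t x k * pd k (fun y => u t y i) x)
          + K * pd i (fun y => ρ t y) x = -(ρ t x * pd i (fun y => Ψ t y) x)) ∧
      lap (Ψ t) x = αN * ρ t x := by
  have h01 : (0 : Fin N) ≠ 1 := by simp [Fin.ext_iff, Nat.mod_eq_of_lt (by omega : 1 < N)]
  obtain ⟨hΦ1, -, hΦ2⟩ := contDiff_succ_iff_deriv.mp (show ContDiff ℝ (1 + 1) Φ from hΦ)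
  have hvel : ∀ s, HasDerivAt a a₂ s := by
    subst ha
    intro s
    simpa using ((hasDerivAt_id s).const_mul a₂).const_add a₁
  subst hρ hu hΨ
  intro t hat x
  refine ⟨continuity_equation h01 hc0 hc1 hc A B (G := fun r => Real.exp (-Φ r / K + C))
    (by fun_prop) (hvel t).differentiableAt hat x, fun i => ?_, ?_⟩
  · rw [material_derivative_eq_zero (selector_idem hc0 hc1 hc) hvel hat, mul_zero, zero_add]
    exact boltzmann_relation hK.ne' C (a t)
      ((hasPDerivAt_plane A B (a t) i x).comp (hΦ1 _).hasDerivAt)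
  · rw [lap_comp_plane A B (a t) h01 hΦ1 x (hΦ2.differentiable one_ne_zero _), hODE]
    simp only [Real.exp_add]
    field_simp

/-- Variants of Theorem 2: `u = (ȧ/a)(x₁, x₂, x̃₃, …, x̃_N)` with each
`x̃ᵢ ∈ {x₁, x₂}` (encoded by `c : Fin N → Fin N` with values in `{0,1}`),
together with `ρ = (1/a²) e^{-Φ((Ax₁+Bx₂)/a)/K + C}`, `a = a₁ + a₂t` and
`Φ'' = (α(N)e^C/(A²+B²)) e^{-Φ/K}`, solve the isothermal Euler–Poisson
equations wherever `a(t) ≠ 0`. -/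
theorem stmt_17 {N : ℕ} [NeZero N] (hN : 3 ≤ N) (A B K C a₁ a₂ αN : ℝ)
    (hK : 0 < K) (ha₁ : a₁ ≠ 0) (hAB : 0 < A ^ 2 + B ^ 2) (hαN : 0 < αN)
    (c : Fin N → Fin N) (hc0 : c 0 = 0) (hc1 : c 1 = 1)
    (hc : ∀ i, c i = 0 ∨ c i = 1)
    (Φ : ℝ → ℝ) (hΦ : ContDiff ℝ 2 Φ)
    (hODE : ∀ s : ℝ, deriv (deriv Φ) s
        = (αN * Real.exp C / (A ^ 2 + B ^ 2)) * Real.exp (-Φ s / K))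
    (a : ℝ → ℝ) (ha : a = fun t => a₁ + a₂ * t)
    (ρ : ℝ → (Fin N → ℝ) → ℝ)
    (hρ : ρ = fun t x =>
      Real.exp (-Φ ((A * x 0 + B * x 1) / a t) / K + C) / (a t) ^ 2)
    (u : ℝ → (Fin N → ℝ) → Fin N → ℝ)
    (hu : u = fun t x i => deriv a t / a t * x (c i))
    (Ψ : ℝ → (Fin N → ℝ) → ℝ)
    (hΨ : Ψ = fun t x => Φ ((A * x 0 + B * x 1) / a t)) :
    ∀ t : ℝ, a t ≠ 0 → ∀ x : Fin N → ℝ,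
      (deriv (fun s => ρ s x) t
          + ∑ i : Fin N, pd i (fun y => ρ t y * u t y i) x = 0) ∧
      (∀ i : Fin N,
        ρ t x * (deriv (fun s => u s x i) t
            + ∑ k : Fin N, u t x k * pd k (fun y => u t y i) x)
          + K * pd i (fun y => ρ t y) x = -(ρ t x * pd i (fun y => Ψ t y) x)) ∧
      lap (Ψ t) x = αN * ρ t x :=
  stmt_17_general hN A B K C a₁ a₂ αN hK hAB c hc0 hc1 hc Φ hΦ hODE a ha ρ hρ u hu Ψ hΨ
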